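/- Unique decomposition / progress for by-need: every closed de Bruijn term M is either an answer A[V], or there exist a unique evaluation context E and unique by-need redex r (deref, assoc-L, or assoc-R) such that M = E[r]. -/

import Mathlib

inductive Tm : Type
  | var : Nat → Tm
  | lam : Tm → Tm
  | app : Tm → Tm → Tm
deriving DecidableEq

/-- shift ↑(M, x, m): increment all indices ≥ m by x -/
def shift : Tm → Nat → Nat → Tm
  | .var n, x, m => if n ≥ m then .var (n + x) else .var n
  | .lam M, x, m => .lam (shift M x (m+1))
  | .app M N, x, m => .app (shift M x m) (shift N x m)

/-- apply a renaming environment R to a term: (R)n = n + R(n) -/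
def ren : List Nat → Tm → Tm
  | R, .var n => .var (n + R.getD n 0)
  | R, .lam M => .lam (ren (0 :: R) M)
  | R, .app M N => .app (ren R M) (ren R N)

/-- values are lambda abstractions -/
def IsVal (M : Tm) : Prop := ∃ M', M = Tm.lam M'

/-- Evaluation contexts E ::= [] | E M | (λ.E) M | (λ.E'[n]) E with n = Δ(E') -/
inductive ECtx : Type
  | hole : ECtx
  | appL : ECtx → Tm → ECtx
  | bind : ECtx → Tm → ECtx
  | opC  : ECtx → ECtx → ECtx

/-- Δ : E → ℕ -/
def delta : ECtx → Nat
  | .hole => 0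
  | .appL E _ => delta E
  | .bind E _ => delta E + 1
  | .opC _ E => delta E

/-- plugging E[M]; in the opC case the bound variable is Δ(E') -/
def plugE : ECtx → Tm → Tm
  | .hole, M => M
  | .appL E N, M => .app (plugE E M) N
  | .bind E N, M => .app (.lam (plugE E M)) N
  | .opC E' E, M => .app (.lam (plugE E' (.var (delta E')))) (plugE E M)

/-- Answer contexts A ::= [] | (λ.A) M -/
inductive ACtx : Type
  | hole : ACtx
  | bind : ACtx → Tm → ACtx
deriving DecidableEq

def plugA : ACtx → Tm → Tm
  | .hole, M => M
  | .bind A N, M => .app (.lam (plugA A M)) N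

/-- by-need redexes: deref, assoc-L, assoc-R -/
inductive IsRedex : Tm → Prop
  | deref : ∀ (E : ECtx) (n : Nat) (V : Tm), IsVal V → delta E = n →
      IsRedex (.app (.lam (plugE E (.var n))) V)
  | assocL : ∀ (A : ACtx) (V M N : Tm), IsVal V →
      IsRedex (.app (.app (.lam (plugA A V)) M) N)
  | assocR : ∀ (E : ECtx) (n : Nat) (A : ACtx) (V M : Tm), IsVal V → delta E = n →
      IsRedex (.app (.lam (plugE E (.var n))) (.app (.lam (plugA A V)) M))

/-- closed at depth d -/
def ClosedAt : Tm → Nat → Prop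
  | .var n, d => n < d
  | .lam M, d => ClosedAt M (d+1)
  | .app M N, d => ClosedAt M d ∧ ClosedAt N d

def IsAnswer (M : Tm) : Prop := ∃ (A : ACtx) (V : Tm), IsVal V ∧ M = plugA A V

/-!
Every term is of exactly one of three shapes: an answer `A[λ.P]`; stuck, `E[n]` with `n ≥ Δ(E)`,
i.e. waiting for the value of a variable that is free in the whole term; or `E[r]` with `r` a
redex. The structural function `decompose` computes the shape, and it recognises every
presentation of a term in each shape, so the presentation is unique because `decompose` is a
function. A closed term is never stuck, since closedness of `E[n]` forces `n < Δ(E)`.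
-/

inductive Decomposition : Type
  | answer : ACtx → Tm → Decomposition
  | stuck : ECtx → Nat → Decomposition
  | redex : ECtx → Tm → Decomposition

def decompose : Tm → Decomposition
  | .var n => .stuck .hole n
  | .lam P => .answer .hole P
  | .app (.lam P) N =>
    match decompose P with
    | .answer A V => .answer (.bind A N) V
    | .redex E r => .redex (.bind E N) r
    | .stuck E n =>
      -- the body needs the variable bound by this λ, so the argument is evaluated next
      if n = delta E then
        match decompose N with
        | .answer _ _ => .redex .hole (.app (.lam P) N)
        | .stuck E' m => .stuck (.opC E E') m
        | .redex E' r => .redex (.opC E E') r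
      else .stuck (.bind E N) n
  | .app M N =>
    match decompose M with
    -- an answer that is not a λ has the form `(λ.A[V]) L`, so `M N` is an assoc-L redex
    | .answer _ _ => .redex .hole (.app M N)
    | .stuck E n => .stuck (.appL E N) n
    | .redex E r => .redex (.appL E N) r

def Decomposition.Describes : Decomposition → Tm → Prop
  | .answer A P, M => M = plugA A (.lam P)
  | .stuck E n, M => delta E ≤ n ∧ M = plugE E (.var n)
  | .redex E r, M => IsRedex r ∧ M = plugE E r

theorem isRedex_app_lam_plugE_plugA (E : ECtx) (A : ACtx) (V : Tm) :
    IsRedex (.app (.lam (plugE E (.var (delta E)))) (plugA A (.lam V))) := by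
  cases A with
  | hole => exact .deref E _ _ ⟨V, rfl⟩ rfl
  | bind A M => exact .assocR E _ A _ M ⟨V, rfl⟩ rfl

theorem describes_decompose (M : Tm) : (decompose M).Describes M := by
  fun_induction decompose M <;> simp_all only [Decomposition.Describes,
    plugE, plugA, delta, zero_le, le_refl, imp_false, true_and, and_true, and_self]
  case case5 => exact isRedex_app_lam_plugE_plugA _ _ _
  case case8 => omega
  case case9 A V not_lam _ _ =>
    cases A with
    | hole => exact absurd rfl (not_lam V)
    | bind A L => exact .assocL A _ L _ ⟨V, rfl⟩

theorem decompose_plugA (A : ACtx) (V : Tm) :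
    decompose (plugA A (.lam V)) = .answer A V := by
  induction A with
  | hole => rfl
  | bind A N ih => simp [plugA, decompose, ih]

theorem decompose_app_of_stuck {M : Tm} {E : ECtx} {n : Nat} (h : decompose M = .stuck E n)
    (N : Tm) : decompose (.app M N) = .stuck (.appL E N) n := by
  cases M <;> simp_all [decompose]

theorem decompose_app_of_redex {M : Tm} {E : ECtx} {r : Tm} (h : decompose M = .redex E r)
    (N : Tm) : decompose (.app M N) = .redex (.appL E N) r := by
  cases M <;> simp_all [decompose]

theorem decompose_plugE_var {E : ECtx} {n : Nat} (h : delta E ≤ n) :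
    decompose (plugE E (.var n)) = .stuck E n := by
  induction E generalizing n with
  | hole => rfl
  | appL E N ih => exact decompose_app_of_stuck (ih h) N
  | bind E N ih =>
    simp only [delta] at h
    simp [plugE, decompose, ih (n := n) (by omega), show n ≠ delta E by omega]
  | opC E E' ih ih' => simp [plugE, decompose, ih le_rfl, ih' h]

theorem decompose_redex {r : Tm} (hr : IsRedex r) : decompose r = .redex .hole r := by
  cases hr with
  | deref E n V hV hn =>
    obtain ⟨V, rfl⟩ := hV
    subst hn
    simp [decompose, decompose_plugE_var le_rfl]
  | assocL A V M N hV =>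
    obtain ⟨V, rfl⟩ := hV
    simp [decompose, decompose_plugA]
  | assocR E n A V M hV hn =>
    obtain ⟨V, rfl⟩ := hV
    subst hn
    simp [decompose, decompose_plugE_var le_rfl, decompose_plugA]

theorem decompose_plugE_redex {E : ECtx} {r : Tm} (hr : IsRedex r) :
    decompose (plugE E r) = .redex E r := by
  induction E with
  | hole => exact decompose_redex hr
  | appL E N ih => exact decompose_app_of_redex ih N
  | bind E N ih => simp [plugE, decompose, ih]
  | opC E E' _ ih' => simp [plugE, decompose, decompose_plugE_var le_rfl, ih']

theorem ClosedAt.of_plugE {E : ECtx} {M : Tm} {d : Nat} (h : ClosedAt (plugE E M) d) :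
    ClosedAt M (d + delta E) := by
  induction E generalizing d with
  | hole => exact h
  | appL E N ih => exact ih h.1
  | bind E N ih => simpa [delta, Nat.add_assoc, Nat.add_comm 1] using ih h.1
  | opC E E' _ ih' => exact ih' h.2

theorem eq_of_plugE_redex_eq {E E' : ECtx} {r r' : Tm} (hr : IsRedex r) (hr' : IsRedex r')
    (h : plugE E r = plugE E' r') : E = E' ∧ r = r' := by
  have := decompose_plugE_redex (E := E') hr'
  rw [← h, decompose_plugE_redex hr] at this
  exact Decomposition.redex.inj this

theorem unique_decomposition_progress :
    ∀ M : Tm, ClosedAt M 0 →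
      IsAnswer M ∨ ∃! p : ECtx × Tm, IsRedex p.2 ∧ M = plugE p.1 p.2 := by
  intro M hM
  have hdesc := describes_decompose M
  rcases hd : decompose M with ⟨A, V⟩ | ⟨E, n⟩ | ⟨E, r⟩ <;> rw [hd] at hdesc
  · exact .inl ⟨A, .lam V, ⟨V, rfl⟩, hdesc⟩
  · obtain ⟨hn, rfl⟩ := hdesc
    have : n < 0 + delta E := hM.of_plugE
    omega
  · refine .inr ⟨(E, r), hdesc, ?_⟩
    rintro ⟨E', r'⟩ ⟨hr', hM'⟩
    obtain ⟨rfl, rfl⟩ := eq_of_plugE_redex_eq hr' hdesc.1 (hM'.symm.trans hdesc.2)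
    rfl
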